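/- Let G be a group acting on a set and suppose N is a subgroup of a finitely generated nilpotent group Γ with Γ/N infinite. If Γ is nilpotent and Γ/N is infinite, then Γ/N surjects onto ℤ; in particular, every infinite finitely generated nilpotent group admits a surjective homomorphism onto ℤ. -/

import Mathlib

/-!
If the abelianization of a nilpotent group `G` is finite, so is that of `G ⧸ Z(G)`, hence by
induction on the nilpotency class `Z(G)` has finite index. Then `G` has only finitely many
commutators, so `[G, G]` is finite by Schur's theorem, and `G` is finite. Consequently an
infinite finitely generated nilpotent group has an infinite finitely generated abelianization,
whose decomposition `ℤ^r × (finite)` has `r > 0`; projecting onto one `ℤ` factor gives the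
surjection.
-/

open Subgroup
open scoped commutatorElement

theorem commutatorElement_mul_mul_of_mem_center {G : Type*} [Group G] {z w : G}
    (hz : z ∈ center G) (hw : w ∈ center G) (g h : G) : ⁅g * z, h * w⁆ = ⁅g, h⁆ := by
  have hzc : ∀ x : G, ⁅z, x⁆ = 1 := fun x =>
    commutatorElement_eq_one_iff_mul_comm.mpr (mem_center_iff.mp hz x).symm
  have hwc : ∀ x : G, ⁅x, w⁆ = 1 := fun x =>
    commutatorElement_eq_one_iff_mul_comm.mpr (mem_center_iff.mp hw x)
  rw [commutatorElement_mul_left_eq_conj_mul, hzc, mul_one, mul_inv_cancel, one_mul,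
    commutatorElement_mul_right_eq_mul_conj, hwc, mul_one, mul_inv_cancel_right]

theorem finite_commutatorSet_of_finite_quotient_center (G : Type*) [Group G]
    [Finite (G ⧸ center G)] : Finite (commutatorSet G) := by
  refine Finite.Set.subset
    (Set.range fun p : (G ⧸ center G) × (G ⧸ center G) => ⁅p.1.out, p.2.out⁆) ?_
  rintro _ ⟨g, h, rfl⟩
  obtain ⟨z, hz⟩ := QuotientGroup.mk_out_eq_mul (center G) g
  obtain ⟨w, hw⟩ := QuotientGroup.mk_out_eq_mul (center G) h
  exact ⟨(g, h), by simp only [hz, hw, commutatorElement_mul_mul_of_mem_center z.2 w.2]⟩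

theorem Abelianization.map_surjective {G H : Type*} [Group G] [Group H] {f : G →* H}
    (hf : Function.Surjective f) : Function.Surjective (Abelianization.map f) := by
  intro x
  induction x using QuotientGroup.induction_on with | H y => ?_
  obtain ⟨g, rfl⟩ := hf y
  exact ⟨of g, rfl⟩

theorem Group.IsNilpotent.finite_of_finite_abelianization (G : Type*) [Group G]
    [Group.IsNilpotent G] [Finite (Abelianization G)] : Finite G := by
  suffices key : Finite (Abelianization G) → Finite G from key ‹_›
  refine Group.nilpotent_center_quotient_ind
    (P := fun G _ _ => Finite (Abelianization G) → Finite G) G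
    (fun _ _ _ _ => Finite.of_subsingleton) fun G _ _ ih hab => ?_
  have : Finite (G ⧸ center G) :=
    ih (Finite.of_surjective _ (Abelianization.map_surjective (QuotientGroup.mk'_surjective _)))
  have := finite_commutatorSet_of_finite_quotient_center G
  -- Schur's theorem now provides the instance `Finite (commutator G)`.
  have : Finite (G ⧸ commutator G) := hab
  exact Finite.of_equiv _ (groupEquivQuotientProdSubgroup (s := commutator G)).symm

theorem CommGroup.exists_surjective_multiplicative_int_of_infinite (A : Type*) [CommGroup A]
    [Group.FG A] [Infinite A] : ∃ φ : A →* Multiplicative ℤ, Function.Surjective φ := by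
  obtain ⟨ι, j, _, _, p, hp, e, ⟨f⟩⟩ := CommGroup.equiv_free_prod_prod_multiplicative_zmod A
  have : ∀ i, NeZero (p i ^ e i) := fun i => ⟨pow_ne_zero _ (hp i).ne_zero⟩
  obtain ⟨k⟩ : Nonempty j := by
    by_contra hj
    have : IsEmpty j := not_nonempty_iff.mp hj
    exact (Finite.of_equiv _ f.symm.toEquiv).false
  refine ⟨((Pi.evalMonoidHom _ k).comp (MonoidHom.fst _ _)).comp f.toMonoidHom, ?_⟩
  exact ((Function.surjective_eval k).comp Prod.fst_surjective).comp f.surjective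

theorem Group.IsNilpotent.exists_surjective_multiplicative_int_of_infinite (G : Type*) [Group G]
    [Group.FG G] [Group.IsNilpotent G] [Infinite G] :
    ∃ φ : G →* Multiplicative ℤ, Function.Surjective φ := by
  have : Infinite (Abelianization G) :=
    not_finite_iff_infinite.mp fun _ => (finite_of_finite_abelianization G).false
  have : Group.FG (Abelianization G) := Group.fg_of_surjective (QuotientGroup.mk'_surjective _)
  obtain ⟨φ, hφ⟩ := CommGroup.exists_surjective_multiplicative_int_of_infinite (Abelianization G)
  exact ⟨φ.comp Abelianization.of, hφ.comp (QuotientGroup.mk'_surjective _)⟩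

/-- If `Γ` is a finitely generated nilpotent group and `N ⊴ Γ` has infinite
quotient, then `Γ/N` surjects onto `ℤ` (phrased via a surjection `Γ → ℤ`
killing `N`); in particular every infinite finitely generated nilpotent group
surjects onto `ℤ`. -/
theorem infinite_nilpotent_quotient_surjects_onto_int (Γ : Type*) [Group Γ]
    [Group.FG Γ] [Group.IsNilpotent Γ] (N : Subgroup Γ) (hN : N.Normal)
    (hinf : Infinite (Γ ⧸ N)) :
    (∃ φ : Γ →* Multiplicative ℤ, Function.Surjective φ ∧ N ≤ φ.ker) ∧
      (∀ (Γ' : Type) (_ : Group Γ') (_ : Group.FG Γ') (_ : Group.IsNilpotent Γ')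
        (_ : Infinite Γ'), ∃ φ : Γ' →* Multiplicative ℤ, Function.Surjective φ) := by
  refine ⟨?_, fun Γ' _ _ _ _ =>
    Group.IsNilpotent.exists_surjective_multiplicative_int_of_infinite Γ'⟩
  obtain ⟨ψ, hψ⟩ := Group.IsNilpotent.exists_surjective_multiplicative_int_of_infinite (Γ ⧸ N)
  refine ⟨ψ.comp (QuotientGroup.mk' N), hψ.comp (QuotientGroup.mk'_surjective N), ?_⟩
  exact fun x hx => by simp [(QuotientGroup.eq_one_iff x).mpr hx]
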